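/- Let L_0, L_1 be d-dimensional subspaces of R^D with largest principal angle θ_1(L_0, L_1) ≤ ε, and let x ∈ R^D satisfy ∠(x, L_0(t)) ≥ ξ for all subspaces L_0(t) on the geodesic between L_0 and L_1 (so in particular ‖Q_{L_0} x‖ ≥ sin(ξ)‖x‖ and ‖Q_{L_1} x‖ ≥ sin(ξ)‖x‖). Then the difference of unit projections satisfies ‖Q_{L_0} x/‖Q_{L_0} x‖ − Q_{L_1} x/‖Q_{L_1} x‖‖ ≤ 2ε/sin(ξ). -/

import Mathlib

/-- Orthogonal projection onto a subspace, as a continuous linear map on the ambient space. -/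
noncomputable def projCLM {D : ℕ} (L : Submodule ℝ (EuclideanSpace ℝ (Fin D))) :
    EuclideanSpace ℝ (Fin D) →L[ℝ] EuclideanSpace ℝ (Fin D) :=
  L.subtypeL.comp (Submodule.orthogonalProjectionOnto L)

/-- Largest principal angle between two equal-dimensional subspaces
(`sin θ₁(L₁,L₂) = ‖P_{L₁} − P_{L₂}‖`). -/
noncomputable def principalAngle {D : ℕ} (L1 L2 : Submodule ℝ (EuclideanSpace ℝ (Fin D))) : ℝ :=
  Real.arcsin ‖projCLM L1 - projCLM L2‖

lemma inner_res (D : ℕ) (L : Submodule ℝ (EuclideanSpace ℝ (Fin D)))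
    (y : EuclideanSpace ℝ (Fin D)) (w : EuclideanSpace ℝ (Fin D)) (hw : w ∈ L) :
    inner ℝ (y - projCLM L y) w = (0:ℝ) :=
  Submodule.starProjection_inner_eq_zero (K := L) y w hw

lemma proj_mem (D : ℕ) (L : Submodule ℝ (EuclideanSpace ℝ (Fin D)))
    (y : EuclideanSpace ℝ (Fin D)) : projCLM L y ∈ L := (Submodule.orthogonalProjectionOnto L y).2

lemma proj_diff_le (D : ℕ) (L0 L1 : Submodule ℝ (EuclideanSpace ℝ (Fin D)))
    (y : EuclideanSpace ℝ (Fin D)) : ‖projCLM L0 y - projCLM L1 y‖ ≤ ‖y‖ := by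
  set u := projCLM L0 y
  set v := projCLM L1 y
  have h1 : inner ℝ (y - u) u = (0:ℝ) := inner_res D L0 y u (proj_mem D L0 y)
  have h2 : inner ℝ (y - v) v = (0:ℝ) := inner_res D L1 y v (proj_mem D L1 y)
  have e1 : inner ℝ y u = (‖u‖:ℝ)^2 := by
    have := h1; rw [inner_sub_left] at this
    rw [← real_inner_self_eq_norm_sq]; linarith
  have e2 : inner ℝ y v = (‖v‖:ℝ)^2 := by
    have := h2; rw [inner_sub_left] at this
    rw [← real_inner_self_eq_norm_sq]; linarith
  have key : ‖u - v‖^2 + ‖y - u - v‖^2 = ‖y‖^2 := by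
    have A : ‖u - v‖^2 = ‖u‖^2 - 2 * inner ℝ u v + ‖v‖^2 := norm_sub_sq_real u v
    have B : ‖y - u - v‖^2 = ‖y - u‖^2 - 2 * inner ℝ (y-u) v + ‖v‖^2 := norm_sub_sq_real (y-u) v
    have C : ‖y - u‖^2 = ‖y‖^2 - 2 * inner ℝ y u + ‖u‖^2 := norm_sub_sq_real y u
    have Dd : inner ℝ (y - u) v = inner ℝ y v - (inner ℝ u v : ℝ) := inner_sub_left y u v
    rw [A, B, C, Dd, e1, e2]; ring
  nlinarith [norm_nonneg (u - v), norm_nonneg y, sq_nonneg ‖y - u - v‖]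

lemma proj_opnorm_le (D : ℕ) (L0 L1 : Submodule ℝ (EuclideanSpace ℝ (Fin D))) :
    ‖projCLM L0 - projCLM L1‖ ≤ 1 := by
  refine ContinuousLinearMap.opNorm_le_bound _ zero_le_one (fun y => ?_)
  simpa using proj_diff_le D L0 L1 y

lemma normalize_sub_le {E : Type*} [NormedAddCommGroup E] [NormedSpace ℝ E]
    (a b : E) (ha : 0 < ‖a‖) (hb : 0 < ‖b‖) :
    ‖‖a‖⁻¹ • a - ‖b‖⁻¹ • b‖ ≤ 2 * ‖a - b‖ / ‖a‖ := by
  have hsplit : ‖a‖⁻¹ • a - ‖b‖⁻¹ • b = ‖a‖⁻¹ • (a - b) + (‖a‖⁻¹ - ‖b‖⁻¹) • b := by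
    rw [smul_sub, sub_smul]; abel
  rw [hsplit]
  have h1 : ‖‖a‖⁻¹ • (a - b)‖ = ‖a - b‖ / ‖a‖ := by
    rw [norm_smul, norm_inv, norm_norm, div_eq_inv_mul]
  have h2 : ‖(‖a‖⁻¹ - ‖b‖⁻¹) • b‖ ≤ ‖a - b‖ / ‖a‖ := by
    rw [norm_smul, Real.norm_eq_abs,
      show ‖a‖⁻¹ - ‖b‖⁻¹ = (‖b‖ - ‖a‖) / (‖a‖ * ‖b‖) by field_simp,
      abs_div, abs_of_pos (mul_pos ha hb)]
    have hba : |‖b‖ - ‖a‖| ≤ ‖a - b‖ := by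
      rw [abs_sub_comm]; exact abs_norm_sub_norm_le a b
    calc |‖b‖ - ‖a‖| / (‖a‖ * ‖b‖) * ‖b‖ = |‖b‖ - ‖a‖| / ‖a‖ := by
            field_simp
      _ ≤ ‖a - b‖ / ‖a‖ := by gcongr
  calc ‖‖a‖⁻¹ • (a - b) + (‖a‖⁻¹ - ‖b‖⁻¹) • b‖
      ≤ ‖‖a‖⁻¹ • (a - b)‖ + ‖(‖a‖⁻¹ - ‖b‖⁻¹) • b‖ := norm_add_le _ _
    _ ≤ ‖a - b‖ / ‖a‖ + ‖a - b‖ / ‖a‖ := by rw [h1]; linarith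
    _ = 2 * ‖a - b‖ / ‖a‖ := by ring


/-- if `θ₁(L₀,L₁) ≤ ε` and `x` makes angle at least `ξ` with both `L₀` and
`L₁` (i.e. `‖Q_{L₀}x‖ ≥ sin(ξ)‖x‖` and `‖Q_{L₁}x‖ ≥ sin(ξ)‖x‖`), then the spherized
residuals satisfy `‖Q_{L₀}x/‖Q_{L₀}x‖ − Q_{L₁}x/‖Q_{L₁}x‖‖ ≤ 2ε/sin ξ`. -/
theorem stmt18 {D d : ℕ} (L0 L1 : Submodule ℝ (EuclideanSpace ℝ (Fin D)))
    (h0 : Module.finrank ℝ L0 = d) (h1 : Module.finrank ℝ L1 = d)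
    (ε ξ : ℝ) (hε : 0 ≤ ε) (hξ : 0 < ξ) (hξ2 : ξ ≤ Real.pi / 2)
    (hangle : principalAngle L0 L1 ≤ ε)
    (x : EuclideanSpace ℝ (Fin D)) (hx : x ≠ 0)
    (h0x : Real.sin ξ * ‖x‖ ≤ ‖x - projCLM L0 x‖)
    (h1x : Real.sin ξ * ‖x‖ ≤ ‖x - projCLM L1 x‖) :
    ‖(‖x - projCLM L0 x‖)⁻¹ • (x - projCLM L0 x)
        - (‖x - projCLM L1 x‖)⁻¹ • (x - projCLM L1 x)‖
      ≤ 2 * ε / Real.sin ξ := by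
  have hsin : 0 < Real.sin ξ := Real.sin_pos_of_pos_of_lt_pi hξ
    (lt_of_le_of_lt hξ2 (by linarith [Real.pi_pos]))
  have hxpos : 0 < ‖x‖ := norm_pos_iff.mpr hx
  have hr : 0 < Real.sin ξ * ‖x‖ := mul_pos hsin hxpos
  set a := x - projCLM L0 x with ha
  set b := x - projCLM L1 x with hb
  have hap : 0 < ‖a‖ := lt_of_lt_of_le hr h0x
  have hbp : 0 < ‖b‖ := lt_of_lt_of_le hr h1x
  -- ‖P0 - P1‖ ≤ ε
  have hnorm1 : ‖projCLM L0 - projCLM L1‖ ≤ 1 := proj_opnorm_le D L0 L1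
  have hPle : ‖projCLM L0 - projCLM L1‖ ≤ ε := by
    have hnn : 0 ≤ ‖projCLM L0 - projCLM L1‖ := norm_nonneg _
    have := Real.sin_le (Real.arcsin_nonneg.mpr hnn)
    rw [Real.sin_arcsin (by linarith) hnorm1] at this
    exact this.trans hangle
  have hab : ‖a - b‖ ≤ ε * ‖x‖ := by
    have : a - b = (projCLM L1 - projCLM L0) x := by
      simp [ha, hb]
    rw [this]
    calc ‖(projCLM L1 - projCLM L0) x‖ ≤ ‖projCLM L1 - projCLM L0‖ * ‖x‖ :=
          (projCLM L1 - projCLM L0).le_opNorm x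
      _ ≤ ε * ‖x‖ := by
          have : ‖projCLM L1 - projCLM L0‖ = ‖projCLM L0 - projCLM L1‖ := norm_sub_rev _ _
          rw [this]; exact mul_le_mul_of_nonneg_right hPle (norm_nonneg x)
  calc ‖‖a‖⁻¹ • a - ‖b‖⁻¹ • b‖ ≤ 2 * ‖a - b‖ / ‖a‖ := normalize_sub_le a b hap hbp
    _ ≤ 2 * (ε * ‖x‖) / (Real.sin ξ * ‖x‖) := by
        apply div_le_div₀ (by positivity) (by linarith) hr h0x
    _ = 2 * ε / Real.sin ξ := by field_simp
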